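/- Let q = Σ_{d=0}^{N} q_d be a noncommutative polynomial in variables x, y with each q_d being d-homogeneous in y and N ≥ 1, and let q̃(x,y,h) := Σ_{d=0}^{N} h^{N−d} q_d(x,y). Let φ : A → B be a *-homomorphism, let x̄ ∈ A^p, ȳ ∈ B^q satisfy q(φ(x̄), ȳ) = 0. In the mapping cylinder Z_{φ⁺} = {(a,f) ∈ A ⊕ C([0,1],B⁺) : φ⁺(a) = f(0)}, define x̃ᵢ = (x̄ᵢ, constant function φ(x̄ᵢ)), ỹⱼ = (0, t ↦ t·ȳⱼ), and h̃ = (0, t ↦ t·1_{B⁺}). Then q̃(x̃, ỹ, h̃) = 0, provided also q_N(x̄, 0) = 0. -/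

import Mathlib

set_option synthInstance.maxHeartbeats 1000000
set_option maxHeartbeats 2000000

open scoped unitInterval

noncomputable section

/-- The algebra endomorphism of the free algebra on variables `x ⊕ y` rescaling each
`y`-variable by `c`. A noncommutative polynomial `q` is `d`-homogeneous in the
`y`-variables iff `yScale c q = c ^ d • q` for all `c`. -/
def yScale (p q : ℕ) (c : ℂ) :
    FreeAlgebra ℂ (Fin p ⊕ Fin q) →ₐ[ℂ] FreeAlgebra ℂ (Fin p ⊕ Fin q) :=
  FreeAlgebra.lift ℂ (Sum.elim (fun i => FreeAlgebra.ι ℂ (Sum.inl i))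
    (fun j => c • FreeAlgebra.ι ℂ (Sum.inr j)))

/-- Evaluation of a noncommutative polynomial at `X`, `Y` in an algebra `R`. -/
def ncEval {p q : ℕ} {R : Type*} [Ring R] [Algebra ℂ R]
    (X : Fin p → R) (Y : Fin q → R) : FreeAlgebra ℂ (Fin p ⊕ Fin q) →ₐ[ℂ] R :=
  FreeAlgebra.lift ℂ (Sum.elim X Y)

/-- The function `h̃₂(t) = t·1` in `C([0,1], B⁺)`. -/
def tOne (B : Type*) [NonUnitalCStarAlgebra B] : C(unitInterval, Unitization ℂ B) :=
  ⟨fun t => (t : ℝ) • (1 : Unitization ℂ B),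
    Continuous.smul continuous_subtype_val continuous_const⟩

/-- The function `ỹ₂(t) = t·y` in `C([0,1], B⁺)`. -/
def tScale {B : Type*} [NonUnitalCStarAlgebra B] (y : B) :
    C(unitInterval, Unitization ℂ B) :=
  ⟨fun t => (t : ℝ) • (y : Unitization ℂ B),
    Continuous.smul continuous_subtype_val continuous_const⟩

/-!
The first-coordinate map to `A⁺` and the evaluations at `t ∈ [0,1]` to `B⁺` are algebra
homomorphisms out of the unitization of `A ⊕ C([0,1], B⁺)` that jointly separate points, so it
suffices to check `q̃(x̃, ỹ, h̃) = 0` after applying each of them. The first kills `h̃` and `ỹ`,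
leaving `q_N(x̄, 0) = 0`. Evaluation at `t` sends `h̃ ↦ t`, `ỹ ↦ t • ȳ`, `x̃ ↦ φ(x̄)`, and by
homogeneity the `d`-th summand becomes `t ^ (N - d) * t ^ d • q_d(φ(x̄), ȳ)`, so the whole sum is
`t ^ N • q(φ(x̄), ȳ) = 0`.
-/

section NcEval

variable {p q : ℕ} {R S : Type*} [Ring R] [Algebra ℂ R] [Ring S] [Algebra ℂ S]

theorem AlgHom.map_ncEval (g : R →ₐ[ℂ] S) (X : Fin p → R) (Y : Fin q → R)
    (a : FreeAlgebra ℂ (Fin p ⊕ Fin q)) :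
    g (ncEval X Y a) = ncEval (g ∘ X) (g ∘ Y) a := by
  suffices g.comp (ncEval X Y) = ncEval (g ∘ X) (g ∘ Y) from DFunLike.congr_fun this a
  refine FreeAlgebra.hom_ext (funext fun v => ?_)
  cases v <;> simp [ncEval]

theorem ncEval_yScale (X : Fin p → R) (Y : Fin q → R) (c : ℂ)
    (a : FreeAlgebra ℂ (Fin p ⊕ Fin q)) :
    ncEval X Y (yScale p q c a) = ncEval X (fun j => c • Y j) a := by
  suffices (ncEval X Y).comp (yScale p q c) = ncEval X (fun j => c • Y j) from
    DFunLike.congr_fun this a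
  refine FreeAlgebra.hom_ext (funext fun v => ?_)
  cases v <;> simp [ncEval, yScale]

theorem ncEval_smul_of_yScale_eq {d : ℕ} {a : FreeAlgebra ℂ (Fin p ⊕ Fin q)}
    (ha : ∀ c : ℂ, yScale p q c a = c ^ d • a) (X : Fin p → R) (Y : Fin q → R) (c : ℂ) :
    ncEval X (fun j => c • Y j) a = c ^ d • ncEval X Y a := by
  rw [← ncEval_yScale, ha, map_smul]

theorem sum_smul_one_pow_mul_ncEval_smul {N : ℕ} {qd : ℕ → FreeAlgebra ℂ (Fin p ⊕ Fin q)}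
    (hhom : ∀ d ≤ N, ∀ c : ℂ, yScale p q c (qd d) = c ^ d • qd d)
    (X : Fin p → R) (Y : Fin q → R) (c : ℂ) :
    ∑ d ∈ Finset.range (N + 1), (c • 1 : R) ^ (N - d) * ncEval X (fun j => c • Y j) (qd d)
      = c ^ N • ncEval X Y (∑ d ∈ Finset.range (N + 1), qd d) := by
  rw [map_sum, Finset.smul_sum]
  refine Finset.sum_congr rfl fun d hd => ?_
  have hdN : d ≤ N := Nat.lt_succ_iff.mp (Finset.mem_range.mp hd)
  rw [ncEval_smul_of_yScale_eq (hhom d hdN), smul_pow, one_pow, smul_mul_smul_comm, one_mul,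
    ← pow_add, Nat.sub_add_cancel hdN]

end NcEval

theorem Finset.sum_range_succ_zero_pow_sub_mul {R : Type*} [Semiring R] (N : ℕ) (f : ℕ → R) :
    ∑ d ∈ Finset.range (N + 1), (0 : R) ^ (N - d) * f d = f N := by
  rw [Finset.sum_range_succ, Nat.sub_self, pow_zero, one_mul, Finset.sum_eq_zero, zero_add]
  intro d hd
  rw [zero_pow (Nat.sub_ne_zero_of_lt (Finset.mem_range.mp hd)), zero_mul]

section Cylinder

variable {𝕜 A X R : Type*} [CommRing 𝕜] [NonUnitalRing A] [Module 𝕜 A] [IsScalarTower 𝕜 A A]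
  [SMulCommClass 𝕜 A A] [TopologicalSpace X] [Ring R] [Algebra 𝕜 R] [TopologicalSpace R]
  [IsTopologicalRing R]

variable (𝕜 A X R) in
def cylinderFst : Unitization 𝕜 (A × C(X, R)) →ₐ[𝕜] Unitization 𝕜 A :=
  Unitization.lift ((Unitization.inrNonUnitalAlgHom 𝕜 A).comp (NonUnitalAlgHom.fst 𝕜 A C(X, R)))

variable (𝕜 A) in
def cylinderEval (t : X) : Unitization 𝕜 (A × C(X, R)) →ₐ[𝕜] R :=
  Unitization.lift
    ((((Pi.evalAlgHom 𝕜 (fun _ => R) t).comp (ContinuousMap.coeFnAlgHom 𝕜)).toNonUnitalAlgHom).comp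
      (NonUnitalAlgHom.snd 𝕜 A C(X, R)))

theorem cylinderFst_apply (z : Unitization 𝕜 (A × C(X, R))) :
    cylinderFst 𝕜 A X R z = Unitization.inl z.fst + (z.snd.1 : Unitization 𝕜 A) := by
  simp [cylinderFst, Unitization.lift_apply, Unitization.algebraMap_eq_inl]

theorem cylinderEval_apply (t : X) (z : Unitization 𝕜 (A × C(X, R))) :
    cylinderEval 𝕜 A t z = algebraMap 𝕜 R z.fst + z.snd.2 t :=
  rfl

theorem cylinderFst_inr (m : A × C(X, R)) : cylinderFst 𝕜 A X R m = m.1 := by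
  simp [cylinderFst_apply]

theorem cylinderEval_inr (t : X) (m : A × C(X, R)) :
    cylinderEval 𝕜 A t (m : Unitization 𝕜 (A × C(X, R))) = m.2 t := by
  simp [cylinderEval_apply]

theorem eq_zero_of_cylinderFst_of_cylinderEval {z : Unitization 𝕜 (A × C(X, R))}
    (h₁ : cylinderFst 𝕜 A X R z = 0) (h₂ : ∀ t, cylinderEval 𝕜 A t z = 0) : z = 0 := by
  rw [cylinderFst_apply] at h₁
  have hfst : z.fst = 0 := by simpa using congrArg (·.fst) h₁
  have hsnd₁ : z.snd.1 = 0 := by simpa using congrArg (·.snd) h₁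
  refine Unitization.ext hfst (Prod.ext hsnd₁ (ContinuousMap.ext fun t => ?_))
  simpa [cylinderEval_apply, hfst] using h₂ t

end Cylinder

theorem homogenized_relation_in_mapping_cylinder_general
    {A B : Type*} [NonUnitalCStarAlgebra A] [NonUnitalCStarAlgebra B]
    (φ : A →⋆ₙₐ[ℂ] B) {p q N : ℕ}
    (qd : ℕ → FreeAlgebra ℂ (Fin p ⊕ Fin q))
    (hhom : ∀ d ≤ N, ∀ c : ℂ, yScale p q c (qd d) = c ^ d • qd d)
    (xb : Fin p → A) (yb : Fin q → B)
    (hq : ncEval (fun i => ((φ (xb i) : Unitization ℂ B)))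
        (fun j => ((yb j : Unitization ℂ B)))
        (∑ d ∈ Finset.range (N + 1), qd d) = 0)
    (hqN : ncEval (fun i => ((xb i : Unitization ℂ A))) (fun _ => (0 : Unitization ℂ A))
        (qd N) = 0) :
    ∑ d ∈ Finset.range (N + 1),
      (Unitization.inr ((0, tOne B) : A × C(unitInterval, Unitization ℂ B))
          : Unitization ℂ (A × C(unitInterval, Unitization ℂ B))) ^ (N - d)
        * ncEval
            (fun i => Unitization.inr
              ((xb i, ContinuousMap.const unitInterval ((φ (xb i) : Unitization ℂ B)))
                : A × C(unitInterval, Unitization ℂ B)))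
            (fun j => Unitization.inr
              ((0, tScale (yb j)) : A × C(unitInterval, Unitization ℂ B)))
            (qd d) = 0 := by
  apply eq_zero_of_cylinderFst_of_cylinderEval
  · simp only [map_sum, map_mul, map_pow, AlgHom.map_ncEval, Function.comp_def, cylinderFst_inr,
      Unitization.inr_zero, Finset.sum_range_succ_zero_pow_sub_mul, hqN]
  · intro t
    simp only [map_sum, map_mul, map_pow, AlgHom.map_ncEval, Function.comp_def, cylinderEval_inr,
      tOne, tScale, ContinuousMap.coe_mk, ContinuousMap.const_apply, ← Complex.coe_smul]
    rw [sum_smul_one_pow_mul_ncEval_smul hhom, hq, smul_zero]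

/-- with `q = Σ_{d=0}^N q_d`, `q_d` `d`-homogeneous in `y`, `N ≥ 1`,
`q(φ(x̄), ȳ) = 0` and `q_N(x̄, 0) = 0`, the elements `x̃ᵢ = (x̄ᵢ, const φ(x̄ᵢ))`,
`ỹⱼ = (0, t ↦ t·ȳⱼ)`, `h̃ = (0, t ↦ t·1)` of the mapping cylinder `Z_{φ⁺}` satisfy
`q̃(x̃, ỹ, h̃) = Σ_{d=0}^N h̃^{N-d} q_d(x̃, ỹ) = 0` (computed in the unitization of the
ambient algebra `A ⊕ C([0,1], B⁺)`). -/
theorem homogenized_relation_in_mapping_cylinder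
    {A B : Type*} [NonUnitalCStarAlgebra A] [NonUnitalCStarAlgebra B]
    (φ : A →⋆ₙₐ[ℂ] B) {p q N : ℕ} (hN : 1 ≤ N)
    (qd : ℕ → FreeAlgebra ℂ (Fin p ⊕ Fin q))
    (hhom : ∀ d ≤ N, ∀ c : ℂ, yScale p q c (qd d) = c ^ d • qd d)
    (hconst : ∀ d ≤ N, FreeAlgebra.algebraMapInv (qd d) = 0)
    (xb : Fin p → A) (yb : Fin q → B)
    (hq : ncEval (fun i => ((φ (xb i) : Unitization ℂ B)))
        (fun j => ((yb j : Unitization ℂ B)))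
        (∑ d ∈ Finset.range (N + 1), qd d) = 0)
    (hqN : ncEval (fun i => ((xb i : Unitization ℂ A))) (fun _ => (0 : Unitization ℂ A))
        (qd N) = 0) :
    ∑ d ∈ Finset.range (N + 1),
      (Unitization.inr ((0, tOne B) : A × C(unitInterval, Unitization ℂ B))
          : Unitization ℂ (A × C(unitInterval, Unitization ℂ B))) ^ (N - d)
        * ncEval
            (fun i => Unitization.inr
              ((xb i, ContinuousMap.const unitInterval ((φ (xb i) : Unitization ℂ B)))
                : A × C(unitInterval, Unitization ℂ B)))
            (fun j => Unitization.inr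
              ((0, tScale (yb j)) : A × C(unitInterval, Unitization ℂ B)))
            (qd d) = 0 :=
  homogenized_relation_in_mapping_cylinder_general φ qd hhom xb yb hq hqN
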